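/- Let e(g) be defined by e(g) = Σ_{i=0}^{s} t_i·2^{t_i−1} + Σ_{i=0}^{s} i·2^{t_i} for g = Σ_{i=0}^{s} 2^{t_i} (binary expansion, t_0 > ... > t_s ≥ 0), and e(0)=0. If 1 ≤ i ≤ j, then e(i+1) + e(j) ≤ e(i+j). -/

import Mathlib

/-!
Splitting off the lowest binary digit gives `e(2n) = 2 e(n) + n` and
`e(2n+1) = e(2n) + s(n)`, where `s` is the binary digit sum; hence `e(n+1) = e(n) + s(n)`.
The inequality then follows by strong induction on `i`, halving `i` and `j`. The only
non-routine input is subadditivity `s(a+b) ≤ s(a) + s(b)`, which comes from Legendre's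
formula `v₂(n!) = n - s(n)` and `a! b! ∣ (a+b)!`.
-/

/-- The strictly decreasing list of exponents `t_0 > t_1 > ⋯ > t_s` in the
binary expansion `g = Σ_{i=0}^{s} 2^(t_i)` of `g`. -/
def expList (g : ℕ) : List ℕ :=
  (((Finset.range (g + 1)).filter (fun k => g.testBit k)).sort (· ≤ ·)).reverse

/-- `e g = Σ_{i=0}^{s} t_i·2^(t_i−1) + Σ_{i=0}^{s} i·2^(t_i)` over the binary
expansion `g = Σ_{i=0}^{s} 2^(t_i)` with `t_0 > t_1 > ⋯ > t_s ≥ 0` (and `e 0 = 0`). -/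
def eHL (g : ℕ) : ℕ :=
  ((expList g).zipIdx.map (fun p => p.1 * 2 ^ (p.1 - 1) + p.2 * 2 ^ p.1)).sum

open Nat

def popcount (n : ℕ) : ℕ := n.bitIndices.length

@[simp] lemma popcount_two_mul (n : ℕ) : popcount (2 * n) = popcount n := by
  simp [popcount]

@[simp] lemma popcount_two_mul_add_one (n : ℕ) : popcount (2 * n + 1) = popcount n + 1 := by
  simp [popcount]

lemma popcount_pos {n : ℕ} (hn : n ≠ 0) : 0 < popcount n := by
  refine List.length_pos_iff.mpr fun h => hn ?_
  rw [← sum_map_two_pow_bitIndices n, h, List.map_nil, List.sum_nil]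

lemma popcount_eq_sum_digits (n : ℕ) : popcount n = (digits 2 n).sum := by
  induction n using Nat.evenOddRec with
  | h0 => simp [popcount]
  | h_even n ih =>
    rcases eq_or_ne n 0 with rfl | hn
    · simp [popcount]
    · rw [popcount_two_mul, ih, digits_def' one_lt_two (n := 2 * n) (by omega)]
      simp
  | h_odd n ih =>
    rw [popcount_two_mul_add_one, ih, digits_def' one_lt_two (n := 2 * n + 1) (by omega),
      show (2 * n + 1) / 2 = n by omega, List.sum_cons]
    omega

lemma popcount_add_le (a b : ℕ) : popcount (a + b) ≤ popcount a + popcount b := by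
  have legendre (n : ℕ) : padicValNat 2 n ! = n - popcount n := by
    simpa [popcount_eq_sum_digits] using sub_one_mul_padicValNat_factorial (p := 2) n
  have hle (n : ℕ) : popcount n ≤ n := popcount_eq_sum_digits n ▸ digit_sum_le 2 n
  have hdvd : padicValNat 2 (a ! * b !) ≤ padicValNat 2 (a + b)! :=
    (padicValNat_dvd_iff_le (factorial_ne_zero _)).mp
      (pow_padicValNat_dvd.trans (factorial_mul_factorial_dvd_factorial_add a b))
  rw [padicValNat.mul (factorial_ne_zero a) (factorial_ne_zero b), legendre, legendre,
    legendre] at hdvd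
  have := hle a; have := hle b; have := hle (a + b)
  omega

lemma expList_eq_reverse_bitIndices (g : ℕ) : expList g = g.bitIndices.reverse := by
  rw [expList, List.reverse_inj]
  have hset : (Finset.range (g + 1)).filter (fun k => g.testBit k) = g.bitIndices.toFinset := by
    ext k
    simp only [Finset.mem_filter, Finset.mem_range, List.mem_toFinset, mem_bitIndices,
      and_iff_right_iff_imp]
    intro hk
    have := ge_two_pow_of_testBit hk
    have := k.lt_two_pow_self
    omega
  rw [hset, List.toFinset_sort _ bitIndices_nodup]
  exact bitIndices_sorted.pairwise.imp le_of_lt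

def eHLTerm (p : ℕ × ℕ) : ℕ := p.1 * 2 ^ (p.1 - 1) + p.2 * 2 ^ p.1

lemma eHL_eq_sum_eHLTerm (g : ℕ) : eHL g = (g.bitIndices.reverse.zipIdx.map eHLTerm).sum := by
  rw [eHL, expList_eq_reverse_bitIndices]; rfl

lemma two_mul_mul_two_pow_sub_one (t : ℕ) : 2 * (t * 2 ^ (t - 1)) = t * 2 ^ t := by
  cases t with
  | zero => rfl
  | succ t => rw [add_tsub_cancel_right, pow_succ]; ring

lemma sum_map_eHLTerm_zipIdx_map_succ (L : List ℕ) (k : ℕ) :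
    (((L.map (· + 1)).zipIdx k).map eHLTerm).sum =
      2 * ((L.zipIdx k).map eHLTerm).sum + (L.map (2 ^ ·)).sum := by
  induction L generalizing k with
  | nil => rfl
  | cons a L ih =>
    simp only [List.map_cons, List.zipIdx_cons, List.sum_cons, ih, eHLTerm,
      add_tsub_cancel_right]
    rw [pow_succ, add_one_mul, ← two_mul_mul_two_pow_sub_one a]
    ring

lemma eHL_two_mul (n : ℕ) : eHL (2 * n) = 2 * eHL n + n := by
  rw [eHL_eq_sum_eHLTerm, eHL_eq_sum_eHLTerm, bitIndices_two_mul, ← List.map_reverse,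
    sum_map_eHLTerm_zipIdx_map_succ, List.map_reverse, List.sum_reverse,
    sum_map_two_pow_bitIndices]

lemma eHL_two_mul_add_one (n : ℕ) : eHL (2 * n + 1) = 2 * eHL n + n + popcount n := by
  rw [← eHL_two_mul, eHL_eq_sum_eHLTerm, eHL_eq_sum_eHLTerm, bitIndices_two_mul_add_one,
    bitIndices_two_mul, List.reverse_cons, List.zipIdx_append, List.map_append,
    List.sum_append]
  simp [eHLTerm, popcount]

lemma eHL_zero : eHL 0 = 0 := by
  simp [eHL_eq_sum_eHLTerm]

lemma eHL_succ (n : ℕ) : eHL (n + 1) = eHL n + popcount n := by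
  induction n using Nat.evenOddRec with
  | h0 => simpa [eHL_zero] using eHL_two_mul_add_one 0
  | h_even n _ => rw [eHL_two_mul_add_one, eHL_two_mul, popcount_two_mul]
  | h_odd n ih =>
    rw [show 2 * n + 1 + 1 = 2 * (n + 1) by ring, eHL_two_mul, ih, eHL_two_mul_add_one,
      popcount_two_mul_add_one]
    ring

theorem eHL_add_le_general (i j : ℕ) (h₂ : i ≤ j) :
    eHL (i + 1) + eHL j ≤ eHL (i + j) := by
  induction i using Nat.strong_induction_on generalizing j with
  | _ i ih =>
  obtain rfl | hi := eq_or_ne i 0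
  · simp [eHL_succ, eHL_zero, popcount]
  obtain ⟨a, rfl | rfl⟩ := i.even_or_odd' <;> obtain ⟨b, rfl | rfl⟩ := j.even_or_odd'
  · have ih_half := ih a (by omega) b (by omega)
    rw [← mul_add, eHL_two_mul_add_one, eHL_two_mul, eHL_two_mul]
    have := eHL_succ a
    omega
  · have ih_half := ih a (by omega) (b + 1) (by omega)
    rw [← add_assoc, eHL_succ, eHL_succ, eHL_succ] at ih_half
    rw [show 2 * a + (2 * b + 1) = 2 * (a + b) + 1 by ring, eHL_two_mul_add_one,
      eHL_two_mul_add_one, eHL_two_mul_add_one]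
    have := popcount_add_le a b
    omega
  · have ih_half := ih a (by omega) b (by omega)
    rw [show 2 * a + 1 + 1 = 2 * (a + 1) by ring, show 2 * a + 1 + 2 * b = 2 * (a + b) + 1 by ring,
      eHL_two_mul_add_one, eHL_two_mul, eHL_two_mul]
    have := popcount_pos (n := a + b) (by omega)
    omega
  · have ih_half := ih a (by omega) (b + 1) (by omega)
    rw [← add_assoc, eHL_succ b] at ih_half
    rw [show 2 * a + 1 + 1 = 2 * (a + 1) by ring,
      show 2 * a + 1 + (2 * b + 1) = 2 * (a + b + 1) by ring,
      eHL_two_mul, eHL_two_mul, eHL_two_mul_add_one]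
    omega

theorem eHL_add_le (i j : ℕ) (h₁ : 1 ≤ i) (h₂ : i ≤ j) :
    eHL (i + 1) + eHL j ≤ eHL (i + j) :=
  eHL_add_le_general i j h₂
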